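/- arXiv:0811.1371 — 6 statements merged into one kernel-verified Lean document; each statement's English description precedes it below -/
import Mathlib

section
/- Let S be a semigroup with an idempotent e such that e·S·e is a group with identity e (i.e., every element of eSe has an inverse in eSe relative to e), and let E be the set of idempotents of S. If S is completely simple with primitive idempotent e, then R : (x,h,y) ↦ x·h·y is a semigroup isomorphism from the Rees product [Se∩E, eSe, eS∩E]_σ onto S, where σ(y,x) = y·x. -/
/-- The Rees–Suschkewitsch isomorphism. Let `S` be a semigroup with an
idempotent `e` such that `H_e = eSe` is a group with identity `e`.  If `S` is
completely simple (simple with `e` primitive), then the map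
`R : (x,h,y) ↦ x*h*y` from the Rees product `[Se∩E, eSe, eS∩E]_σ`
(with sandwich map `σ(y,x) = y*x`) onto `S` is a semigroup isomorphism:
`R` is bijective, the Rees product is closed under the sandwich
multiplication, and `R` transforms the sandwich multiplication into the
multiplication of `S`. -/
theorem rees_isomorphism {S : Type*} [Semigroup S] (e : S)
    (he : e * e = e)
    -- `eSe` is a group with identity `e`:
    (hid : ∀ s : S, e * (e * s * e) = e * s * e ∧ (e * s * e) * e = e * s * e)
    (hinv : ∀ a : S, (∃ s, a = e * s * e) → ∃ b, (∃ s, b = e * s * e) ∧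
      a * b = e ∧ b * a = e)
    -- `S` is simple:
    (hsimple : ∀ a b : S, ∃ u v : S, u * a * v = b)
    -- `e` is a primitive idempotent:
    (hprim : ∀ f : S, f * f = f → e * f = f → f * e = f → f = e) :
    Function.Bijective
      (fun t : {x : S // (∃ s, x = s * e) ∧ x * x = x} ×
               {h : S // ∃ s, h = e * s * e} ×
               {y : S // (∃ s, y = e * s) ∧ y * y = y} =>
        (t.1 : S) * (t.2.1 : S) * (t.2.2 : S)) ∧
    (∀ (x x' : {x : S // (∃ s, x = s * e) ∧ x * x = x})
       (h h' : {h : S // ∃ s, h = e * s * e})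
       (y y' : {y : S // (∃ s, y = e * s) ∧ y * y = y}),
      -- closure of the middle coordinate of the sandwich product:
      (∃ s, (h : S) * ((y : S) * (x' : S)) * (h' : S) = e * s * e) ∧
      -- `R` is multiplicative with respect to the sandwich multiplication:
      (x : S) * ((h : S) * ((y : S) * (x' : S)) * (h' : S)) * (y' : S) =
        ((x : S) * (h : S) * (y : S)) * ((x' : S) * (h' : S) * (y' : S))) := by
  -- basic facts
  have hee : ∀ z : S, e * (e * z) = e * z := fun z => by rw [← mul_assoc, he]
  -- for x ∈ Se: x * e = x
  have hxe : ∀ x : S, (∃ s, x = s * e) → x * e = x := by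
    rintro x ⟨s, rfl⟩; rw [mul_assoc, he]
  -- for y ∈ eS: e * y = y
  have hey : ∀ y : S, (∃ s, y = e * s) → e * y = y := by
    rintro y ⟨s, rfl⟩; rw [← mul_assoc, he]
  -- for x ∈ Se ∩ E: e * x = e
  have hXe : ∀ x : S, (∃ s, x = s * e) → x * x = x → e * x = e := by
    intro x hx hxx
    have h1 : x * e = x := hxe x hx
    refine hprim (e * x) ?_ ?_ ?_
    · rw [mul_assoc e x (e * x), ← mul_assoc x e x, h1, hxx]
    · rw [← mul_assoc, he]
    · rw [mul_assoc, h1]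
  -- for y ∈ eS ∩ E: y * e = e
  have hYe : ∀ y : S, (∃ s, y = e * s) → y * y = y → y * e = e := by
    intro y hy hyy
    have h1 : e * y = y := hey y hy
    refine hprim (y * e) ?_ ?_ ?_
    · rw [mul_assoc y e (y * e), ← mul_assoc e y e, h1, ← mul_assoc, hyy]
    · rw [← mul_assoc, h1]
    · rw [mul_assoc, he]
  -- key surjectivity lemma: a group inverse of e*s*e which "inverts" s
  have hsts : ∀ s : S, ∃ t : S, (∃ w, t = e * w * e) ∧
      (e * s * e) * t = e ∧ t * (e * s * e) = e ∧ s * t * s = s := by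
    intro s
    obtain ⟨u, v, huv⟩ := hsimple e s
    obtain ⟨t₁, ht₁m, h1a, h1b⟩ := hinv (e * u * e) ⟨u, rfl⟩
    obtain ⟨t₂, ht₂m, h2a, h2b⟩ := hinv (e * v * e) ⟨v, rfl⟩
    obtain ⟨w₁, hw₁⟩ := ht₁m
    obtain ⟨w₂, hw₂⟩ := ht₂m
    have ht₁e : t₁ * e = t₁ := by rw [hw₁]; exact (hid w₁).2
    have het₁ : e * t₁ = t₁ := by rw [hw₁]; exact (hid w₁).1
    have ht₂e : t₂ * e = t₂ := by rw [hw₂]; exact (hid w₂).2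
    have het₂ : e * t₂ = t₂ := by rw [hw₂]; exact (hid w₂).1
    have hafac : e * s * e = (e * u * e) * (e * v * e) := by
      rw [← huv]; simp only [mul_assoc, hee]
    have c2 : ∀ z : S, e * (v * (t₂ * z)) = e * z := fun z => by
      calc e * (v * (t₂ * z)) = e * (v * ((e * t₂) * z)) := by rw [het₂]
        _ = (e * v * e * t₂) * z := by simp only [mul_assoc]
        _ = e * z := by rw [h2a]
    have c1 : ∀ z : S, t₁ * (u * (e * z)) = e * z := fun z => by
      calc t₁ * (u * (e * z)) = (t₁ * e) * (u * (e * z)) := by rw [ht₁e]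
        _ = (t₁ * (e * u * e)) * z := by simp only [mul_assoc]
        _ = e * z := by rw [h1b]
    refine ⟨t₂ * t₁, ⟨w₂ * e * (e * w₁), ?_⟩, ?_, ?_, ?_⟩
    · rw [hw₁, hw₂]; simp only [mul_assoc]
    · rw [hafac]
      calc (e * u * e) * (e * v * e) * (t₂ * t₁)
          = (e * u * e) * ((e * v * e * t₂) * t₁) := by simp only [mul_assoc]
        _ = (e * u * e) * (e * t₁) := by rw [h2a]
        _ = e := by rw [het₁, h1a]
    · rw [hafac]
      calc t₂ * t₁ * ((e * u * e) * (e * v * e))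
          = t₂ * ((t₁ * (e * u * e)) * (e * v * e)) := by simp only [mul_assoc]
        _ = t₂ * (e * (e * v * e)) := by rw [h1b]
        _ = e := by rw [(hid v).1, h2b]
    · have key : (u * e * v) * (t₂ * t₁) * (u * e * v) = u * e * v := by
        calc (u * e * v) * (t₂ * t₁) * (u * e * v)
            = u * (e * (v * (t₂ * (t₁ * (u * (e * v)))))) := by simp only [mul_assoc]
          _ = u * (e * (t₁ * (u * (e * v)))) := by rw [c2]
          _ = u * (e * (e * v)) := by rw [c1]
          _ = u * (e * v) := by rw [hee]
          _ = u * e * v := by rw [mul_assoc]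
      rw [huv] at key
      exact key
  constructor
  · constructor
    · -- injectivity
      rintro ⟨⟨x, hx1, hx2⟩, ⟨h, hh1⟩, ⟨y, hy1, hy2⟩⟩
        ⟨⟨x', hx1', hx2'⟩, ⟨h', hh1'⟩, ⟨y', hy1', hy2'⟩⟩ hR
      simp only at hR
      -- recover the middle coordinate
      have recov : ∀ a b c : S, (∃ s, a = s * e) → a * a = a → (∃ s, b = e * s * e) →
          (∃ s, c = e * s) → c * c = c → e * (a * b * c) * e = b := by
        rintro a b c ha haa ⟨s, rfl⟩ hc hcc
        have hax : e * a = e := hXe a ha haa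
        have hcy : c * e = e := hYe c hc hcc
        calc e * (a * (e * s * e) * c) * e
            = (e * a) * ((e * s * e) * (c * e)) := by simp only [mul_assoc]
          _ = e * ((e * s * e) * e) := by rw [hax, hcy]
          _ = e * s * e := by rw [(hid s).2, (hid s).1]
      have hmid : h = h' := by
        have r1 := recov x h y hx1 hx2 hh1 hy1 hy2
        have r2 := recov x' h' y' hx1' hx2' hh1' hy1' hy2'
        rw [← r1, ← r2, hR]
      obtain ⟨t, htm, hht, hth⟩ := hinv h hh1
      obtain ⟨w, hw⟩ := htm
      have het : e * t = t := by rw [hw]; exact (hid w).1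
      have hte : t * e = t := by rw [hw]; exact (hid w).2
      -- recover the left coordinate
      have recx : ∀ a c : S, (∃ s, a = s * e) → (∃ s, c = e * s) → c * c = c →
          (a * h * c) * t = a := by
        intro a c ha hc hcc
        have hcy : c * e = e := hYe c hc hcc
        calc a * h * c * t = a * (h * (c * (e * t))) := by rw [het]; simp only [mul_assoc]
          _ = a * (h * ((c * e) * t)) := by rw [mul_assoc c e t]
          _ = a * (h * t) := by rw [hcy, het]
          _ = a * e := by rw [hht]
          _ = a := hxe a ha
      -- recover the right coordinate
      have recy : ∀ a c : S, (∃ s, a = s * e) → a * a = a → (∃ s, c = e * s) →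
          t * (a * h * c) = c := by
        intro a c ha haa hc
        have hax : e * a = e := hXe a ha haa
        calc t * (a * h * c) = ((t * e) * a) * (h * c) := by rw [hte]; simp only [mul_assoc]
          _ = (t * (e * a)) * (h * c) := by rw [mul_assoc t e a]
          _ = (t * h) * c := by rw [hax, hte, mul_assoc]
          _ = e * c := by rw [hth]
          _ = c := hey c hc
      have hxeq : x = x' := by
        have r1 := recx x y hx1 hy1 hy2
        have r2 : (x' * h' * y') * t = x' := by
          rw [← hmid]; exact recx x' y' hx1' hy1' hy2'
        rw [← r1, ← r2, hR]
      have hyeq : y = y' := by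
        have r1 := recy x y hx1 hx2 hy1
        have r2 : t * (x' * h' * y') = y' := by
          rw [← hmid]; exact recy x' y' hx1' hx2' hy1'
        rw [← r1, ← r2, hR]
      simp only [Prod.mk.injEq, Subtype.mk.injEq]
      exact ⟨hxeq, hmid, hyeq⟩
    · -- surjectivity
      intro s
      obtain ⟨t, ⟨w, hw⟩, hat, hta, hs3⟩ := hsts s
      have het : e * t = t := by rw [hw]; exact (hid w).1
      have hte : t * e = t := by rw [hw]; exact (hid w).2
      refine ⟨⟨⟨s * t, ⟨s * t, ?_⟩, ?_⟩, ⟨e * s * e, s, rfl⟩, ⟨t * s, ⟨t * s, ?_⟩, ?_⟩⟩, ?_⟩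
      · rw [mul_assoc, hte]
      · calc (s * t) * (s * t) = (s * t * s) * t := by simp only [mul_assoc]
          _ = s * t := by rw [hs3]
      · rw [← mul_assoc, het]
      · calc (t * s) * (t * s) = t * (s * t * s) := by simp only [mul_assoc]
          _ = t * s := by rw [hs3]
      · show (s * t) * (e * s * e) * (t * s) = s
        calc (s * t) * (e * s * e) * (t * s)
            = s * ((t * (e * s * e)) * (t * s)) := by simp only [mul_assoc]
          _ = s * (e * (t * s)) := by rw [hta]
          _ = s * (t * s) := by rw [← mul_assoc e t s, het]
          _ = s := by rw [← mul_assoc, hs3]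
  · -- closure and multiplicativity
    intro x x' h h' y y'
    obtain ⟨s₁, hs₁⟩ := h.2
    obtain ⟨s₂, hs₂⟩ := h'.2
    constructor
    · exact ⟨s₁ * e * ((y : S) * (x' : S)) * (e * s₂), by
        rw [hs₁, hs₂]; simp only [mul_assoc]⟩
    · simp only [mul_assoc]
end

section
/- Let S be a Hausdorff topological semigroup and x ∈ S. Suppose that for some free ultrafilter p on ℕ, the double sequence (x^{m-n})_{m ≥ n} has a double p-limit e = lim_{n→p} lim_{m→p} x^{m-n} in S (meaning: the set P of n for which e_{-n} := lim_{m→p} x^{m-n} exists in S belongs to p, and the p-limit of (e_{-n})_{n∈P} exists and equals e). Then e is an idempotent: e·e = e. -/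
/-!
Writing `E n = lim_{m→p} x^(m-n)`, the identity `x^(m-n) = x^(m-k) * x^(k-n)` for `n < k < m`
gives `E n = E k * x^(k-n)` in the limit `m → p`; letting `k → p` then gives `E n = e * E n`,
and letting `n → p` gives `e = e * e`. Freeness of `p` is what makes `m → p` eventually exceed any
fixed `k`.
-/

open Filter Topology

def FreeUltrafilter (p : Ultrafilter ℕ) : Prop := (↑p : Filter ℕ) ≤ Filter.cofinite

theorem FreeUltrafilter.eventually_gt {p : Ultrafilter ℕ} (hp : FreeUltrafilter p) (k : ℕ) :
    ∀ᶠ m in (p : Filter ℕ), k < m :=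
  hp (Nat.cofinite_eq_atTop ▸ eventually_gt_atTop k)

section PowerRecurrence

variable {S : Type*} [Semigroup S] {x : S} {a : ℕ → ℕ → S}

theorem commute_of_power_recurrence (ha1 : ∀ n, a (n + 1) n = x)
    (ha2 : ∀ m n, n < m → a (m + 1) n = a m n * x) {m n : ℕ} (hnm : n < m) :
    Commute (a m n) x := by
  induction m, hnm using Nat.le_induction with
  | base => exact ha1 n ▸ Commute.refl x
  | succ m hnm ih => exact ha2 m n hnm ▸ ih.mul_left (Commute.refl x)

theorem eq_mul_of_power_recurrence (ha1 : ∀ n, a (n + 1) n = x)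
    (ha2 : ∀ m n, n < m → a (m + 1) n = a m n * x) {n k m : ℕ} (hnk : n < k) (hkm : k < m) :
    a m n = a m k * a k n := by
  induction m, hkm using Nat.le_induction with
  | base => rw [ha2 k n hnk, ha1, (commute_of_power_recurrence ha1 ha2 hnk).eq]
  | succ m hkm ih =>
    rw [ha2 m n (hnk.trans hkm), ih, ha2 m k hkm, mul_assoc, mul_assoc,
      (commute_of_power_recurrence ha1 ha2 hnk).eq]

end PowerRecurrence

theorem mul_self_eq_of_tendsto_of_eq_mul {ι S : Type*} [Preorder ι] [Mul S]
    [TopologicalSpace S] [T2Space S] [ContinuousMul S] {p : Filter ι} [p.NeBot]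
    (hp : ∀ k, ∀ᶠ m in p, k < m) {a : ι → ι → S}
    (hsplit : ∀ n k m, n < k → k < m → a m n = a m k * a k n) {e : S} {E : ι → S}
    (hP : ∀ᶠ n in p, Tendsto (a · n) p (𝓝 (E n))) (hE : Tendsto E p (𝓝 e)) :
    e * e = e := by
  have inner_split : ∀ᶠ n in p, ∀ᶠ k in p, E n = E k * a k n := by
    filter_upwards [hP] with n hn
    filter_upwards [hp n, hP] with k hnk hk
    refine tendsto_nhds_unique hn ((hk.mul_const (a k n)).congr' ?_)
    filter_upwards [hp k] with m hkm using (hsplit n k m hnk hkm).symm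
  have left_absorb : ∀ᶠ n in p, e * E n = E n := by
    filter_upwards [hP, inner_split] with n hn hEn
    exact tendsto_nhds_unique (hE.mul hn) (tendsto_const_nhds.congr' hEn)
  exact tendsto_nhds_unique ((hE.const_mul e).congr' left_absorb) hE

/-- Let `S` be a Hausdorff topological semigroup, `x ∈ S`, and `p` a free
ultrafilter on `ℕ`.  Let `a m n = x^(m-n)` (for `m > n`), encoded by the
recurrences `a (n+1) n = x` and `a (m+1) n = a m n * x`.  If the double
`p`-limit `e = lim_{n→p} lim_{m→p} x^(m-n)` exists (the set `P` of `n` for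
which the inner limit `E n = lim_{m→p} x^(m-n)` exists belongs to `p`, and
`E` has `p`-limit `e`), then `e` is an idempotent. -/
theorem idempotent_of_double_p_limit {S : Type*} [Semigroup S]
    [TopologicalSpace S] [T2Space S] [ContinuousMul S]
    (x : S) (p : Ultrafilter ℕ) (hp : FreeUltrafilter p)
    (a : ℕ → ℕ → S)
    (ha1 : ∀ n, a (n + 1) n = x)
    (ha2 : ∀ m n, n < m → a (m + 1) n = a m n * x)
    (e : S) (E : ℕ → S)
    (hP : {n : ℕ | Filter.Tendsto (fun m => a m n) ↑p (nhds (E n))} ∈ p)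
    (hE : Filter.Tendsto E ↑p (nhds e)) :
    e * e = e :=
  mul_self_eq_of_tendsto_of_eq_mul hp.eventually_gt
    (fun _ _ _ ↦ eq_mul_of_power_recurrence ha1 ha2) hP hE
end

section
/- Every sequentially compact Hausdorff topological space is doubly countably compact: for every double sequence (x_{m,n})_{m,n∈ℕ} in X there exists a free ultrafilter p on ℕ such that the double p-limit lim_{n→p} lim_{m→p} x_{m,n} exists in X. -/
/-!
A countable product of sequentially compact spaces is sequentially compact, by a diagonal
extraction. Viewing the double sequence as a sequence in `ℕ → X`, some subsequence `x ∘ φ`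
converges pointwise to `L`, and some further subsequence `φ ∘ σ` makes `L ∘ φ ∘ σ` converge
to `e`. Any ultrafilter refining the image of `atTop` under `φ ∘ σ` is free and realises both
limits.
-/

open Filter Topology

namespace Nat

def IsNestedSubseqs (ψ : ℕ → ℕ → ℕ) : Prop :=
  ∀ n, ∃ g, StrictMono g ∧ ψ (n + 1) = ψ n ∘ g

variable {ψ : ℕ → ℕ → ℕ}

theorem exists_strictMono_eq_comp_of_le (hψ : IsNestedSubseqs ψ)
    {n k : ℕ} (hnk : n ≤ k) : ∃ g, StrictMono g ∧ ψ k = ψ n ∘ g := by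
  induction k, hnk using Nat.le_induction with
  | base => exact ⟨id, strictMono_id, rfl⟩
  | succ k _ ih =>
    obtain ⟨g, hg, hk⟩ := ih
    obtain ⟨g', hg', hsucc⟩ := hψ k
    exact ⟨g ∘ g', hg.comp hg', by rw [hsucc, hk]; rfl⟩

theorem strictMono_diag_of_nested (h₀ : StrictMono (ψ 0))
    (hψ : IsNestedSubseqs ψ) : StrictMono fun k => ψ k k := by
  refine strictMono_nat_of_lt_succ fun k => ?_
  obtain ⟨g, hg, hk⟩ := exists_strictMono_eq_comp_of_le hψ (Nat.zero_le k)
  obtain ⟨g', hg', hsucc⟩ := hψ k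
  have hmono : StrictMono (ψ k) := hk ▸ h₀.comp hg
  calc ψ k k < ψ k (g' (k + 1)) := hmono (k.lt_succ_self.trans_le (hg'.id_le _))
    _ = ψ (k + 1) (k + 1) := by rw [hsucc]; rfl

theorem tendsto_diag_map_of_nested (hψ : IsNestedSubseqs ψ)
    (n : ℕ) : Tendsto (fun k => ψ k k) atTop (map (ψ n) atTop) := by
  refine (atTop_basis.map (ψ n)).tendsto_right_iff.2 fun N _ => ?_
  filter_upwards [eventually_ge_atTop n, eventually_ge_atTop N] with k hnk hNk
  obtain ⟨g, hg, hk⟩ := exists_strictMono_eq_comp_of_le hψ hnk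
  exact ⟨g k, hNk.trans (hg.id_le k), by rw [hk]; rfl⟩

end Nat

section Pi

variable {X : ℕ → Type*} [∀ n, TopologicalSpace (X n)] [∀ n, SeqCompactSpace (X n)]

theorem exists_nested_subseq_tendsto (x : ℕ → ∀ n, X n) :
    ∃ ψ : ℕ → ℕ → ℕ, ψ 0 = id ∧ Nat.IsNestedSubseqs ψ ∧
      ∀ n, ∃ a, Tendsto (fun j => x (ψ (n + 1) j) n) atTop (𝓝 a) := by
  choose a g hg ha using fun n (f : ℕ → ℕ) => SeqCompactSpace.tendsto_subseq fun m => x (f m) n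
  let ψ : ℕ → ℕ → ℕ := fun n => Nat.rec id (fun n f => f ∘ g n f) n
  exact ⟨ψ, rfl, fun n => ⟨g n (ψ n), hg n _, rfl⟩, fun n => ⟨a n (ψ n), ha n _⟩⟩

instance Pi.seqCompactSpace_nat : SeqCompactSpace (∀ n, X n) := by
  refine ⟨fun x _ => ?_⟩
  obtain ⟨ψ, hψ₀, hψ, hconv⟩ := exists_nested_subseq_tendsto x
  choose a ha using hconv
  refine ⟨a, Set.mem_univ a, fun k => ψ k k,
    Nat.strictMono_diag_of_nested (hψ₀ ▸ strictMono_id) hψ, tendsto_pi_nhds.2 fun n => ?_⟩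
  exact ((tendsto_map'_iff (f := fun m => x m n)).2 (ha n)).comp
    (Nat.tendsto_diag_map_of_nested hψ (n + 1))

end Pi

theorem seqCompact_doubly_countably_compact_general {X : Type*} [TopologicalSpace X]
    [SeqCompactSpace X] (x : ℕ → ℕ → X) :
    ∃ p : Ultrafilter ℕ, FreeUltrafilter p ∧
      ∃ (L : ℕ → X) (e : X),
        {n : ℕ | Filter.Tendsto (fun m => x m n) ↑p (nhds (L n))} ∈ p ∧
        Filter.Tendsto L ↑p (nhds e) := by
  obtain ⟨L, φ, hφ, hxL⟩ := SeqCompactSpace.tendsto_subseq x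
  obtain ⟨e, σ, hσ, hLe⟩ := SeqCompactSpace.tendsto_subseq (L ∘ φ)
  set F := map (φ ∘ σ) atTop
  have hF : F ≤ cofinite := Nat.cofinite_eq_atTop ▸ (hφ.comp hσ).tendsto_atTop
  have hp : (Ultrafilter.of F : Filter ℕ) ≤ F := Ultrafilter.of_le F
  refine ⟨Ultrafilter.of F, hp.trans hF, L, e, univ_mem' fun n => ?_, ?_⟩
  · exact ((tendsto_map'_iff (f := fun m => x m n)).2
      ((tendsto_pi_nhds.1 hxL n).comp hσ.tendsto_atTop)).mono_left hp
  · exact ((tendsto_map'_iff (f := L)).2 hLe).mono_left hp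

/-- Every sequentially compact Hausdorff space is doubly countably compact:
for each double sequence `(x_{m,n})` there is a free ultrafilter `p` on `ℕ`
such that the double `p`-limit `lim_{n→p} lim_{m→p} x_{m,n}` exists: the set
of `n` for which the inner `p`-limit `L n = lim_{m→p} x_{m,n}` exists belongs
to `p`, and `L` has a `p`-limit `e` in `X`. -/
theorem seqCompact_doubly_countably_compact {X : Type*} [TopologicalSpace X]
    [T2Space X] [SeqCompactSpace X] (x : ℕ → ℕ → X) :
    ∃ p : Ultrafilter ℕ, FreeUltrafilter p ∧
      ∃ (L : ℕ → X) (e : X),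
        {n : ℕ | Filter.Tendsto (fun m => x m n) ↑p (nhds (L n))} ∈ p ∧
        Filter.Tendsto L ↑p (nhds e) :=
  seqCompact_doubly_countably_compact_general x
end

section
/- Let S be a Hausdorff topological semigroup such that the power S^{S^ℕ} (with product topology) is countably compact. Then S is p-compact for some free ultrafilter p on ℕ. -/
/-!
A cluster point `a` of the evaluation functionals `δ n = fun f ↦ f n` is the limit of `δ` along
some ultrafilter `p` finer than `atTop`, hence free. Convergence in the product topology is
coordinatewise, so every sequence `u` converges along `p` to `a u`.
-/

open Filter Topology

theorem MapClusterPt.exists_ultrafilter_tendsto_eval {ι X : Type*} [TopologicalSpace X]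
    {l : Filter ι} {a : (ι → X) → X} (ha : MapClusterPt a l (fun i f ↦ f i)) :
    ∃ p : Ultrafilter ι, ↑p ≤ l ∧ ∀ u : ι → X, Tendsto u p (𝓝 (a u)) := by
  obtain ⟨p, hpl, hp⟩ := mapClusterPt_iff_ultrafilter.mp ha
  exact ⟨p, hpl, fun u ↦ tendsto_pi_nhds.mp hp u⟩

theorem freeUltrafilter_of_le_atTop {p : Ultrafilter ℕ} (hp : ↑p ≤ (atTop : Filter ℕ)) :
    FreeUltrafilter p := by
  rwa [FreeUltrafilter, Nat.cofinite_eq_atTop]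

theorem pCompact_of_countablyCompact_bigPower_general {S : Type*} [TopologicalSpace S]
    (hcc : ∀ u : ℕ → ((ℕ → S) → S), ∃ a : (ℕ → S) → S,
      MapClusterPt a Filter.atTop u) :
    ∃ p : Ultrafilter ℕ, FreeUltrafilter p ∧
      ∀ u : ℕ → S, ∃ a : S, Filter.Tendsto u ↑p (nhds a) := by
  obtain ⟨a, ha⟩ := hcc fun n f ↦ f n
  obtain ⟨p, hp_atTop, hp_tendsto⟩ := ha.exists_ultrafilter_tendsto_eval
  exact ⟨p, freeUltrafilter_of_le_atTop hp_atTop, fun u ↦ ⟨a u, hp_tendsto u⟩⟩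

/-- If `S` is a Hausdorff topological semigroup whose power `S^(S^ℕ)` (with
the product topology) is countably compact (every sequence has an
accumulation point), then `S` is `p`-compact for some free ultrafilter `p`
on `ℕ`. -/
theorem pCompact_of_countablyCompact_bigPower {S : Type*} [Semigroup S]
    [TopologicalSpace S] [T2Space S] [ContinuousMul S]
    (hcc : ∀ u : ℕ → ((ℕ → S) → S), ∃ a : (ℕ → S) → S,
      MapClusterPt a Filter.atTop u) :
    ∃ p : Ultrafilter ℕ, FreeUltrafilter p ∧
      ∀ u : ℕ → S, ∃ a : S, Filter.Tendsto u ↑p (nhds a) :=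
  pCompact_of_countablyCompact_bigPower_general hcc
end

section
/- Let S be a Hausdorff topological semigroup whose square S × S is countably compact. Then S contains no isomorphic copy of the bicyclic semigroup: there is no injective semigroup homomorphism from the bicyclic monoid C(p,q) into S. -/
/-- The multiplication of the bicyclic monoid `C(p,q)` (generated by `p`, `q`
with `q * p = 1`), in the normal form `(a, b) ↔ p^a * q^b`:
`p^a q^b * p^c q^d = p^(a + c - min b c) * q^(b + d - min b c)`. -/
def bicyclicMul (u v : ℕ × ℕ) : ℕ × ℕ :=
  (u.1 + v.1 - min u.2 v.1, u.2 + v.2 - min u.2 v.1)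

/-! Let `(a, b)` be a cluster point of the sequence `(q^n, p^n)` in `S × S`. Since
`q^n p^n = 1`, continuity gives `a b = 1`, so `1` lies in the open set
`W = {x | p q x ≠ x}` and some neighbourhoods `U ∋ a`, `V ∋ b` satisfy `U V ⊆ W`.
Taking `n < m` with `q^n ∈ U` and `p^m ∈ V` puts `q^n p^m = p^(m - n)` in `W`,
which is absurd because `p q` fixes every positive power of `p`. -/

open Filter Topology

lemma bicyclicMul_qPow_pPow_of_le {n m : ℕ} (h : n ≤ m) :
    bicyclicMul (0, n) (m, 0) = (m - n, 0) := by
  simp [bicyclicMul, min_eq_left h]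

lemma bicyclicMul_pq_one : bicyclicMul (1, 1) (0, 0) = (1, 1) := by
  simp [bicyclicMul]

lemma bicyclicMul_pq_pPow_of_pos {k : ℕ} (hk : 0 < k) :
    bicyclicMul (1, 1) (k, 0) = (k, 0) := by
  simp [bicyclicMul, min_eq_left (Nat.one_le_iff_ne_zero.mpr hk.ne')]

section ClusterPoints

variable {S : Type*} [Mul S] [TopologicalSpace S] [ContinuousMul S]

lemma mul_eq_of_mapClusterPt [T1Space S] {ι : Type*} {F : Filter ι} {u : ι → S × S}
    {a b c : S} (hab : MapClusterPt (a, b) F u) (hc : ∀ i, (u i).1 * (u i).2 = c) :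
    a * b = c :=
  isClosed_singleton.mem_of_mapClusterPt
    (hab.continuousAt_comp (f := fun p : S × S => p.1 * p.2) continuous_mul.continuousAt)
    (Eventually.of_forall hc)

lemma exists_lt_mul_mem_of_mapClusterPt {u : ℕ → S × S} {a b : S}
    (hab : MapClusterPt (a, b) atTop u) {W : Set S} (hW : W ∈ 𝓝 (a * b)) :
    ∃ n m, n < m ∧ (u n).1 * (u m).2 ∈ W := by
  obtain ⟨U, hU, V, hV, hUV⟩ := mem_nhds_prod_iff.mp (continuous_mul.continuousAt hW)
  have hfreq : ∃ᶠ n in atTop, u n ∈ U ×ˢ V :=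
    mapClusterPt_iff_frequently.mp hab _ (prod_mem_nhds hU hV)
  obtain ⟨n, -, hn⟩ := frequently_atTop.mp hfreq 0
  obtain ⟨m, hnm, hm⟩ := frequently_atTop.mp hfreq (n + 1)
  exact ⟨n, m, hnm, hUV (show ((u n).1, (u m).2) ∈ U ×ˢ V from ⟨hn.1, hm.2⟩)⟩

end ClusterPoints

/-- A Hausdorff topological semigroup `S` whose square `S × S` is countably
compact contains no isomorphic copy of the bicyclic monoid: there is no
injective semigroup homomorphism from `C(p,q)` into `S`. -/
theorem no_bicyclic_of_countablyCompact_square {S : Type*} [Semigroup S]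
    [TopologicalSpace S] [T2Space S] [ContinuousMul S]
    (hcc : ∀ u : ℕ → S × S, ∃ a : S × S, MapClusterPt a Filter.atTop u) :
    ¬ ∃ φ : ℕ × ℕ → S, Function.Injective φ ∧
        ∀ u v : ℕ × ℕ, φ (bicyclicMul u v) = φ u * φ v := by
  rintro ⟨φ, hinj, hhom⟩
  obtain ⟨⟨a, b⟩, hab⟩ := hcc fun n => (φ (0, n), φ (n, 0))
  have hab_one : a * b = φ (0, 0) := mul_eq_of_mapClusterPt hab fun n => by
    rw [← hhom, bicyclicMul_qPow_pPow_of_le le_rfl, Nat.sub_self]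
  have hne : φ (1, 1) * φ (0, 0) ≠ φ (0, 0) := by
    rw [← hhom, bicyclicMul_pq_one]
    exact hinj.ne (by simp)
  have hW : {x | φ (1, 1) * x ≠ x} ∈ 𝓝 (a * b) :=
    (isOpen_ne_fun (continuous_const_mul _) continuous_id).mem_nhds (hab_one ▸ hne)
  obtain ⟨n, m, hnm, hmem⟩ := exists_lt_mul_mem_of_mapClusterPt hab hW
  refine hmem ?_
  dsimp only
  rw [← hhom, bicyclicMul_qPow_pPow_of_le hnm.le, ← hhom,
    bicyclicMul_pq_pPow_of_pos (Nat.sub_pos_of_lt hnm)]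
end

section
/- Let X, Y be regular sequentially compact sequential topological spaces and G a sequentially compact sequential topological group, with σ : Y × X → G continuous. Then the Rees product [X,G,Y]_σ with the product topology is a regular, sequential, countably compact topological semigroup. -/
/-!
Sequential compactness passes to finite products by extracting subsequences coordinatewise, and
it gives countable compactness. For sequentiality, let `F ⊆ A × B` be sequentially closed and
`(a, b) ∉ F`. Regularity of `B` gives a closed neighbourhood `K` of `b` missing the slice of `F`
over `a`; as `B` is sequentially compact, the projection of `F ∩ (A × K)` to `A` is sequentially
closed, hence closed, so its complement times `K` is a neighbourhood of `(a, b)` missing `F`.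
-/

/-- The sandwich multiplication of the Rees product `[X,G,Y]_σ`. -/
def reesMul {X Y G : Type*} [Group G] (σ : Y × X → G)
    (a b : X × G × Y) : X × G × Y :=
  (a.1, a.2.1 * σ (a.2.2, b.1) * b.2.1, b.2.2)

open Filter Topology Set

section

variable {A B : Type*} [TopologicalSpace A] [TopologicalSpace B]

theorem IsSeqCompact.prod {s : Set A} {t : Set B} (hs : IsSeqCompact s) (ht : IsSeqCompact t) :
    IsSeqCompact (s ×ˢ t) := by
  intro u hu
  obtain ⟨a, ha, φ, hφ, hua⟩ := hs fun n => (hu n).1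
  obtain ⟨b, hb, ψ, hψ, hub⟩ := ht fun n => (hu (φ n)).2
  exact ⟨(a, b), ⟨ha, hb⟩, φ ∘ ψ, hφ.comp hψ,
    (hua.comp hψ.tendsto_atTop).prodMk_nhds hub⟩

instance Prod.seqCompactSpace [SeqCompactSpace A] [SeqCompactSpace B] :
    SeqCompactSpace (A × B) :=
  ⟨univ_prod_univ (α := A) (β := B) ▸ isSeqCompact_univ.prod isSeqCompact_univ⟩

theorem IsSeqClosed.inter {s t : Set A} (hs : IsSeqClosed s) (ht : IsSeqClosed t) :
    IsSeqClosed (s ∩ t) :=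
  fun _ _ hu hp => ⟨hs (fun n => (hu n).1) hp, ht (fun n => (hu n).2) hp⟩

/-- The sequential analogue of `isClosedMap_fst_of_compactSpace`. -/
theorem IsSeqClosed.image_fst [SeqCompactSpace B] {F : Set (A × B)} (hF : IsSeqClosed F) :
    IsSeqClosed (Prod.fst '' F) := by
  intro x a hx hxa
  choose p hpF hpx using hx
  obtain ⟨b, φ, hφ, hb⟩ := SeqCompactSpace.tendsto_subseq fun n => (p n).2
  have hpa : Tendsto (fun n => (p (φ n)).1) atTop (𝓝 a) := by
    simp only [hpx]
    exact hxa.comp hφ.tendsto_atTop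
  exact ⟨(a, b), hF (fun n => hpF (φ n)) (hpa.prodMk_nhds hb), rfl⟩

/-- A special case of Boehme's theorem. -/
instance sequentialSpace_prod_of_seqCompactSpace [SequentialSpace A] [RegularSpace B]
    [SeqCompactSpace B] [SequentialSpace B] : SequentialSpace (A × B) := by
  refine ⟨fun F hF => isOpen_compl_iff.mp <| isOpen_iff_mem_nhds.mpr ?_⟩
  rintro ⟨a, b⟩ hab
  have hslice : IsClosed {y | (a, y) ∈ F} :=
    (hF.preimage (continuous_const.prodMk continuous_id).seqContinuous).isClosed
  obtain ⟨K, hK, hKclosed, hKF⟩ :=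
    exists_mem_nhds_isClosed_subset (hslice.isOpen_compl.mem_nhds hab)
  have hproj : IsClosed (Prod.fst '' (F ∩ univ ×ˢ K)) :=
    (hF.inter (isClosed_univ.prod hKclosed).isSeqClosed).image_fst.isClosed
  have ha : a ∉ Prod.fst '' (F ∩ univ ×ˢ K) := by
    rintro ⟨⟨_, y⟩, ⟨hyF, -, hyK⟩, rfl⟩
    exact hKF hyK hyF
  filter_upwards [prod_mem_nhds (hproj.isOpen_compl.mem_nhds ha) hK]
  rintro ⟨x, y⟩ ⟨hx, hy⟩ hxy
  exact hx ⟨(x, y), ⟨hxy, trivial, hy⟩, rfl⟩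

end

/-- Let `X`, `Y` be regular, sequentially compact, sequential spaces and `G`
a sequentially compact, sequential topological group, with `σ : Y × X → G`
continuous.  Then the Rees product `[X,G,Y]_σ` with the product topology is
a regular, sequential, countably compact topological semigroup. -/
theorem reesProd_regular_sequential_countablyCompact
    {X Y G : Type*} [TopologicalSpace X] [TopologicalSpace Y]
    [TopologicalSpace G] [Group G] [IsTopologicalGroup G]
    [RegularSpace X] [SeqCompactSpace X] [SequentialSpace X]
    [RegularSpace Y] [SeqCompactSpace Y] [SequentialSpace Y]
    [SeqCompactSpace G] [SequentialSpace G]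
    (σ : Y × X → G) (hσ : Continuous σ) :
    RegularSpace (X × G × Y) ∧ SequentialSpace (X × G × Y) ∧
      (∀ u : ℕ → X × G × Y, ∃ a : X × G × Y, MapClusterPt a Filter.atTop u) ∧
      Continuous (fun q : (X × G × Y) × (X × G × Y) => reesMul σ q.1 q.2) := by
  refine ⟨inferInstance, inferInstance, fun u => ?_, by unfold reesMul; fun_prop⟩
  obtain ⟨a, φ, hφ, ha⟩ := SeqCompactSpace.tendsto_subseq u
  exact ⟨a, ha.mapClusterPt.of_comp hφ.tendsto_atTop⟩
end
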